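/- Let S be an N×N real symmetric positive definite matrix. There exists an N×N real antisymmetric matrix J̃ such that min{Re(λ) : λ an eigenvalue of S + J̃} = Tr(S)/N. Moreover Tr(S)/N ≥ min σ(S), where min σ(S) is the smallest eigenvalue of S, and this inequality is strict as soon as S admits two different eigenvalues. -/

import Mathlib

/-!
Conjugating by a suitable orthogonal `Q`, every real `N × N` matrix `S` acquires the constant
diagonal `c = Tr S / N`: by the intermediate value theorem along a rotation between two basis
vectors there is a unit vector `v` with `vᵀ S v = c`; a Householder reflection makes `v` the first
basis vector, and one recurses on the complementary block. If `M = Qᵀ S Q` has constant diagonal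
`c`, the upper triangular `U` with `U + Uᵀ = M + Mᵀ` has spectrum `{c}`, and `J = Q U Qᵀ - S` is
antisymmetric because `Q U Qᵀ` and `S` have the same symmetric part.

The least eigenvalue of the symmetric matrix `S` is at most the mean `Tr S / N` of its eigenvalues,
with equality only when all eigenvalues coincide.
-/

open Matrix

namespace Matrix

section OneBlockDiag

variable {n : ℕ} {R : Type*} [Semiring R]

/-- The block diagonal matrix `diag(1, Q)`. -/
def oneBlockDiag (Q : Matrix (Fin n) (Fin n) R) : Matrix (Fin (n + 1)) (Fin (n + 1)) R :=
  of (Fin.cons (Fin.cons 1 0) fun i => Fin.cons 0 (Q i))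

theorem transpose_oneBlockDiag (Q : Matrix (Fin n) (Fin n) R) :
    (oneBlockDiag Q)ᵀ = oneBlockDiag Qᵀ := by
  ext i j
  cases i using Fin.cases <;> cases j using Fin.cases <;> simp [oneBlockDiag]

theorem oneBlockDiag_mul (A B : Matrix (Fin n) (Fin n) R) :
    oneBlockDiag A * oneBlockDiag B = oneBlockDiag (A * B) := by
  ext i j
  cases i using Fin.cases <;> cases j using Fin.cases <;>
    simp [oneBlockDiag, mul_apply, Fin.sum_univ_succ]

theorem oneBlockDiag_one : oneBlockDiag (1 : Matrix (Fin n) (Fin n) R) = 1 := by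
  ext i j
  cases i using Fin.cases <;> cases j using Fin.cases <;>
    simp [oneBlockDiag, one_apply, (Fin.succ_ne_zero _).symm]

theorem transpose_oneBlockDiag_mul_mul_zero_zero (Q : Matrix (Fin n) (Fin n) R)
    (M : Matrix (Fin (n + 1)) (Fin (n + 1)) R) :
    ((oneBlockDiag Q)ᵀ * M * oneBlockDiag Q) 0 0 = M 0 0 := by
  simp [oneBlockDiag, mul_apply, Fin.sum_univ_succ]

theorem transpose_oneBlockDiag_mul_mul_succ_succ (Q : Matrix (Fin n) (Fin n) R)
    (M : Matrix (Fin (n + 1)) (Fin (n + 1)) R) (i j : Fin n) :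
    ((oneBlockDiag Q)ᵀ * M * oneBlockDiag Q) i.succ j.succ =
      (Qᵀ * M.submatrix Fin.succ Fin.succ * Q) i j := by
  simp [oneBlockDiag, mul_apply, Fin.sum_univ_succ]

end OneBlockDiag

variable {ι R : Type*}

theorem exists_isUpperTriangular_add_transpose_eq [AddCommMonoid R] [LinearOrder ι]
    (M : Matrix ι ι R) :
    ∃ U : Matrix ι ι R, U.IsUpperTriangular ∧ (∀ i, U i i = M i i) ∧ U + Uᵀ = M + Mᵀ := by
  refine ⟨of fun i j => if i < j then M i j + M j i else if i = j then M i i else 0,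
    fun i j (hji : j < i) => ?_, fun i => by simp, ?_⟩
  · simp [hji.not_gt, hji.ne']
  · ext i j
    rcases lt_trichotomy i j with h | rfl | h
    · simp [h, h.not_gt, h.ne']
    · simp
    · simp [h, h.not_gt, h.ne', add_comm]

variable [Fintype ι]

theorem transpose_mul_mul_apply_self [Semiring R] (Q S : Matrix ι ι R) (i : ι) :
    (Qᵀ * S * Q) i i = (fun k => Q k i) ⬝ᵥ (S *ᵥ fun k => Q k i) := by
  simp only [mul_apply, transpose_apply, dotProduct, mulVec, Finset.sum_mul, Finset.mul_sum]
  rw [Finset.sum_comm]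
  simp [mul_assoc]

variable [DecidableEq ι]

theorem spectrum_mul_mul_transpose [CommRing R] {Q : Matrix ι ι R} (hQ : Qᵀ * Q = 1)
    (U : Matrix ι ι R) : spectrum R (Q * U * Qᵀ) = spectrum R U := by
  ext μ
  rw [mem_spectrum_iff_not_isUnit_eval_charpoly, mem_spectrum_iff_not_isUnit_eval_charpoly,
    charpoly_mul_comm, ← mul_assoc, hQ, one_mul]

theorem spectrum_eq_range_diag_of_isUpperTriangular [Field R] [LinearOrder ι]
    {U : Matrix ι ι R} (hU : U.IsUpperTriangular) : spectrum R U = Set.range U.diag := by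
  ext μ
  simp [mem_spectrum_iff_isRoot_charpoly, charpoly_of_isUpperTriangular U hU,
    Polynomial.eval_prod, Finset.prod_eq_zero_iff, sub_eq_zero, eq_comm (a := μ)]

theorem exists_orthogonal_col_eq {v : ι → ℝ} (hv : v ⬝ᵥ v = 1) (i : ι) :
    ∃ Q : Matrix ι ι ℝ, Qᵀ * Q = 1 ∧ ∀ j, Q j i = v j := by
  by_cases hvi : v = Pi.single i 1
  · exact ⟨1, by simp, fun j => by simp [hvi, one_apply, Pi.single_apply]⟩
  -- the Householder reflection in the hyperplane orthogonal to `w = v - Pi.single i 1`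
  set w := v - Pi.single i 1
  have hw : w ⬝ᵥ w = 2 * (1 - v i) := by
    simp only [w, sub_dotProduct, dotProduct_sub, hv, single_dotProduct, dotProduct_single]
    simp
    ring
  have hvi' : 1 - v i ≠ 0 := fun h =>
    sub_ne_zero.mpr hvi (dotProduct_self_eq_zero.mp (by rw [hw, h, mul_zero]))
  set a := (1 - v i)⁻¹
  have ha : a * (1 - v i) = 1 := inv_mul_cancel₀ hvi'
  refine ⟨1 - a • vecMulVec w w, ?_, fun j => ?_⟩
  · have hW : vecMulVec w w * vecMulVec w w = (w ⬝ᵥ w) • vecMulVec w w := by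
      rw [vecMulVec_mul_vecMulVec, vecMulVec_smul]
    simp only [transpose_sub, transpose_one, transpose_smul, transpose_vecMulVec, sub_mul,
      mul_sub, one_mul, mul_one, smul_mul_smul_comm, hW, hw, smul_smul]
    linear_combination (norm := module) (2 * a) • ha • vecMulVec w w
  · simp only [Matrix.sub_apply, Matrix.smul_apply, vecMulVec_apply, smul_eq_mul, one_apply, w,
      Pi.sub_apply, Pi.single_apply, if_true]
    linear_combination (v j - if j = i then 1 else 0) * ha

theorem exists_unit_dotProduct_mulVec_eq [Nonempty ι] (S : Matrix ι ι ℝ) {c : ℝ}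
    (hc : S.trace = Fintype.card ι * c) : ∃ v : ι → ℝ, v ⬝ᵥ v = 1 ∧ v ⬝ᵥ (S *ᵥ v) = c := by
  have hsum : ∑ i, S i i = ∑ _i : ι, c := by simpa [trace] using hc
  obtain ⟨i, -, hi⟩ := Finset.exists_le_of_sum_le Finset.univ_nonempty hsum.le
  obtain ⟨j, -, hj⟩ := Finset.exists_le_of_sum_le Finset.univ_nonempty hsum.ge
  by_cases hij : i = j
  · subst hij
    exact ⟨Pi.single i 1, by simp, by simpa using le_antisymm hi hj⟩
  let γ : ℝ → ι → ℝ := fun t => Real.cos t • Pi.single i 1 + Real.sin t • Pi.single j 1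
  have hγ : Continuous fun t => γ t ⬝ᵥ (S *ᵥ γ t) := by fun_prop
  obtain ⟨t, -, ht⟩ := intermediate_value_Icc (by positivity : (0 : ℝ) ≤ Real.pi / 2)
    hγ.continuousOn (show c ∈ Set.Icc _ _ by simpa [γ] using And.intro hi hj)
  refine ⟨γ t, ?_, ht⟩
  simp [γ, hij, Ne.symm hij, ← sq]

theorem exists_orthogonal_conj_diag_eq : ∀ {n : ℕ} (S : Matrix (Fin n) (Fin n) ℝ) {c : ℝ},
    S.trace = n * c → ∃ Q : Matrix (Fin n) (Fin n) ℝ, Qᵀ * Q = 1 ∧ ∀ i, (Qᵀ * S * Q) i i = c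
  | 0, _, _, _ => ⟨1, by simp, fun i => i.elim0⟩
  | n + 1, S, c, hc => by
    obtain ⟨v, hv, hvS⟩ := exists_unit_dotProduct_mulVec_eq S (by simpa using hc)
    obtain ⟨Q₁, hQ₁, hQ₁v⟩ := exists_orthogonal_col_eq hv 0
    have hM : (Q₁ᵀ * S * Q₁) 0 0 = c := by
      simp only [transpose_mul_mul_apply_self, hQ₁v, ← hvS]
    have hMtr : (Q₁ᵀ * S * Q₁).trace = S.trace := by
      rw [trace_mul_cycle, mul_eq_one_comm.mp hQ₁, one_mul]
    obtain ⟨Q', hQ', hQ'M⟩ := exists_orthogonal_conj_diag_eq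
        ((Q₁ᵀ * S * Q₁).submatrix Fin.succ Fin.succ) (c := c) (by
      have := trace_submatrix_succ (Q₁ᵀ * S * Q₁)
      push_cast at hc
      linarith)
    refine ⟨Q₁ * oneBlockDiag Q', ?_, fun i => ?_⟩
    · rw [transpose_mul, mul_assoc, ← mul_assoc Q₁ᵀ, hQ₁, one_mul, transpose_oneBlockDiag,
        oneBlockDiag_mul, hQ', oneBlockDiag_one]
    · have hconj : (Q₁ * oneBlockDiag Q')ᵀ * S * (Q₁ * oneBlockDiag Q') =
          (oneBlockDiag Q')ᵀ * (Q₁ᵀ * S * Q₁) * oneBlockDiag Q' := by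
        simp only [transpose_mul, Matrix.mul_assoc]
      rw [hconj]
      cases i using Fin.cases with
      | zero => rw [transpose_oneBlockDiag_mul_mul_zero_zero, hM]
      | succ i => rw [transpose_oneBlockDiag_mul_mul_succ_succ, hQ'M]

theorem exists_transpose_eq_neg_spectrum_add_eq_singleton [LinearOrder ι] [Nonempty ι]
    {S Q : Matrix ι ι ℝ} (hQ : Qᵀ * Q = 1) {c : ℝ} (hdiag : ∀ i, (Qᵀ * S * Q) i i = c) :
    ∃ J : Matrix ι ι ℝ, Jᵀ = -J ∧ spectrum ℂ ((S + J).map Complex.ofReal) = {(c : ℂ)} := by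
  obtain ⟨U, hU, hUdiag, hUsum⟩ := exists_isUpperTriangular_add_transpose_eq (Qᵀ * S * Q)
  have hsymm : Q * U * Qᵀ + Q * Uᵀ * Qᵀ = S + Sᵀ := by
    have hQQ : Q * Qᵀ = 1 := mul_eq_one_comm.mp hQ
    calc Q * U * Qᵀ + Q * Uᵀ * Qᵀ = Q * (U + Uᵀ) * Qᵀ := by noncomm_ring
      _ = (Q * Qᵀ) * (S + Sᵀ) * (Q * Qᵀ) := by
        rw [hUsum]
        simp only [transpose_mul, transpose_transpose]
        noncomm_ring
      _ = S + Sᵀ := by rw [hQQ, one_mul, mul_one]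
  refine ⟨Q * U * Qᵀ - S, ?_, ?_⟩
  · rw [transpose_sub, transpose_mul, transpose_mul, transpose_transpose, ← mul_assoc,
      eq_sub_of_add_eq' hsymm]
    abel
  · have hmap (A B : Matrix ι ι ℝ) :
        (A * B).map Complex.ofReal = A.map Complex.ofReal * B.map Complex.ofReal :=
      Matrix.map_mul (f := Complex.ofRealHom)
    have hQc : (Q.map Complex.ofReal)ᵀ * Q.map Complex.ofReal = 1 := by
      rw [← transpose_map, ← hmap, hQ, Matrix.map_one _ Complex.ofReal_zero Complex.ofReal_one]
    have hUc : (U.map Complex.ofReal).diag = fun _ => (c : ℂ) :=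
      funext fun i => by simp [hUdiag, hdiag]
    rw [add_sub_cancel, hmap, hmap, transpose_map, spectrum_mul_mul_transpose hQc,
      spectrum_eq_range_diag_of_isUpperTriangular (U := U.map Complex.ofReal)
        (hU.map Complex.ofRealHom), hUc,
      Set.range_const]

end Matrix

theorem Fintype.exists_isLeast_range_le_sum_div_card {ι : Type*} [Fintype ι] [Nonempty ι]
    (f : ι → ℝ) :
    ∃ m, IsLeast (Set.range f) m ∧ m ≤ (∑ i, f i) / Fintype.card ι ∧
      ((Set.range f).Nontrivial → m < (∑ i, f i) / Fintype.card ι) := by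
  obtain ⟨i₀, -, hi₀⟩ := Finset.exists_min_image Finset.univ f Finset.univ_nonempty
  have hcard : (0 : ℝ) < Fintype.card ι := by exact_mod_cast Fintype.card_pos
  have hconst : f i₀ * Fintype.card ι = ∑ _i : ι, f i₀ := by simp [mul_comm]
  refine ⟨f i₀, ⟨⟨i₀, rfl⟩, Set.forall_mem_range.2 fun i => hi₀ i (Finset.mem_univ i)⟩, ?_, ?_⟩
  · rw [le_div_iff₀ hcard, hconst]
    exact Finset.sum_le_sum hi₀
  · rintro ⟨_, ⟨i, rfl⟩, _, ⟨j, rfl⟩, hij⟩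
    obtain ⟨k, hk⟩ : ∃ k, f i₀ < f k := by
      by_contra! h
      exact hij (by rw [le_antisymm (h i) (hi₀ i (Finset.mem_univ i)),
        le_antisymm (h j) (hi₀ j (Finset.mem_univ j))])
    rw [lt_div_iff₀ hcard, hconst]
    exact Finset.sum_lt_sum hi₀ ⟨k, Finset.mem_univ k, hk⟩

/-- For `S` symmetric positive definite there is an antisymmetric `J̃` such
that the minimal real part of the spectrum of `S + J̃` equals `Tr(S)/N`. Moreover
`Tr(S)/N ≥ min σ(S)`, strictly if `S` has two different eigenvalues. -/
theorem exists_optimal_antisymmetric_perturbation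
    (N : ℕ) (hN : 1 ≤ N) (S : Matrix (Fin N) (Fin N) ℝ) (hS : S.PosDef) :
    (∃ J : Matrix (Fin N) (Fin N) ℝ, Jᵀ = -J ∧
      IsLeast {r : ℝ | ∃ μ ∈ spectrum ℂ ((S + J).map (Complex.ofReal)), μ.re = r}
        (S.trace / N)) ∧
    (∃ μ₀ : ℝ, IsLeast (spectrum ℝ S) μ₀ ∧ μ₀ ≤ S.trace / N ∧
      ((∃ a ∈ spectrum ℝ S, ∃ b ∈ spectrum ℝ S, a ≠ b) → μ₀ < S.trace / N)) := by
  have : Nonempty (Fin N) := ⟨⟨0, hN⟩⟩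
  have hc : S.trace = N * (S.trace / N) :=
    (mul_div_cancel₀ _ (by exact_mod_cast (Nat.one_le_iff_ne_zero.mp hN))).symm
  refine ⟨?_, ?_⟩
  · obtain ⟨Q, hQ, hdiag⟩ := exists_orthogonal_conj_diag_eq S hc
    obtain ⟨J, hJ, hspec⟩ := exists_transpose_eq_neg_spectrum_add_eq_singleton hQ hdiag
    exact ⟨J, hJ, by simp [hspec, IsLeast, lowerBounds]⟩
  · rw [hS.1.spectrum_real_eq_range_eigenvalues, hS.1.trace_eq_sum_eigenvalues]
    simpa only [Fintype.card_fin, RCLike.ofReal_real_eq_id, id_eq, Set.Nontrivial] using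
      Fintype.exists_isLeast_range_le_sum_div_card hS.1.eigenvalues
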